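/- Let d ≥ 1 and let u be a smooth (C^∞) function on [−1,1] with u > 0 on [−1,1]. Then ∫_{−1}^{1} ( |u'|² / u ) ν · (L u) dν_d = ( d/(d+2) ) ∫_{−1}^{1} ( |u'|⁴ / u² ) ν² dν_d − ( 2(d−1)/(d+2) ) ∫_{−1}^{1} ( |u'|² u'' / u ) ν² dν_d, where L u = ν u'' − d x u'. -/

import Mathlib

open MeasureTheory Real Set
open scoped NNReal ENNReal

noncomputable section

/-- The normalization constant `Z_d = √π Γ(d/2)/Γ((d+1)/2)`. -/
def Zd (d : ℕ) : ℝ := Real.sqrt π * Real.Gamma ((d : ℝ) / 2) / Real.Gamma (((d : ℝ) + 1) / 2)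

/-- The probability measure `dν_d(x) = Z_d⁻¹ (1 − x²)^{d/2−1} dx` on `(−1,1)`. -/
def nuMeas (d : ℕ) : Measure ℝ :=
  (volume.restrict (Set.Ioo (-1 : ℝ) 1)).withDensity
    fun x => ENNReal.ofReal ((1 - x ^ 2) ^ ((d : ℝ) / 2 - 1) / Zd d)

lemma Zd_pos {d : ℕ} (hd : 1 ≤ d) : 0 < Zd d := by
  have h1 : (0:ℝ) < (d:ℝ) / 2 := by positivity
  have h2 : (0:ℝ) < ((d:ℝ) + 1) / 2 := by positivity
  exact div_pos (mul_pos (Real.sqrt_pos.2 Real.pi_pos) (Real.Gamma_pos_of_pos h1))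
    (Real.Gamma_pos_of_pos h2)

lemma nu_pos {x : ℝ} (hx : x ∈ Set.Ioo (-1:ℝ) 1) : 0 < 1 - x^2 := by
  nlinarith [hx.1, hx.2]

lemma nu_le_one {x : ℝ} : 1 - x^2 ≤ 1 := by nlinarith [sq_nonneg x]

lemma cont_nu_rpow {q : ℝ} (hq : 0 ≤ q) : Continuous (fun x : ℝ => (1 - x^2) ^ q) :=
  (Real.continuous_rpow_const hq).comp (continuous_const.sub (continuous_pow 2))

/-- Convert integral over nuMeas to a weighted integral over Ioo. -/
lemma integral_nuMeas (d : ℕ) (hd : 1 ≤ d) (F : ℝ → ℝ) :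
    ∫ x, F x ∂(nuMeas d) =
      ∫ x in Set.Ioo (-1:ℝ) 1, ((1 - x^2) ^ ((d:ℝ)/2 - 1) / Zd d) * F x := by
  rw [nuMeas]
  have hcont : ContinuousOn (fun x : ℝ => (1 - x ^ 2) ^ ((d : ℝ) / 2 - 1) / Zd d)
      (Set.Ioo (-1:ℝ) 1) := by
    apply ContinuousOn.div_const
    apply ContinuousOn.rpow_const (by fun_prop)
    exact fun x hx => Or.inl (nu_pos hx).ne'
  have hmeas : AEMeasurable (fun x : ℝ =>
      (((1 - x ^ 2) ^ ((d : ℝ) / 2 - 1) / Zd d).toNNReal))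
      (volume.restrict (Set.Ioo (-1:ℝ) 1)) :=
    measurable_real_toNNReal.comp_aemeasurable (hcont.aemeasurable measurableSet_Ioo)
  have heq : (fun x : ℝ => ENNReal.ofReal ((1 - x ^ 2) ^ ((d : ℝ) / 2 - 1) / Zd d))
      = fun x => ((((1 - x ^ 2) ^ ((d : ℝ) / 2 - 1) / Zd d).toNNReal : ℝ≥0) : ℝ≥0∞) := rfl
  rw [heq, integral_withDensity_eq_integral_smul₀ hmeas]
  apply setIntegral_congr_fun measurableSet_Ioo
  intro x hx
  have h0 : (0:ℝ) ≤ (1 - x ^ 2) ^ ((d : ℝ) / 2 - 1) / Zd d :=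
    div_nonneg (Real.rpow_nonneg (nu_pos hx).le _) (Zd_pos hd).le
  simp [NNReal.smul_def, Real.coe_toNNReal _ h0]

/-- Integrability of (cont on Icc) × (nonneg power of ν) over Ioo. -/
lemma integrableOn_weighted {G : ℝ → ℝ} (hG : ContinuousOn G (Set.Icc (-1:ℝ) 1)) {q : ℝ}
    (hq : 0 ≤ q) :
    IntegrableOn (fun x => G x * (1 - x^2) ^ q) (Set.Ioo (-1:ℝ) 1) := by
  obtain ⟨C, hC⟩ := isCompact_Icc.exists_bound_of_continuousOn hG
  have hmeas : AEStronglyMeasurable (fun x => G x * (1 - x^2) ^ q)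
      (volume.restrict (Set.Ioo (-1:ℝ) 1)) :=
    ((hG.mono Set.Ioo_subset_Icc_self).aestronglyMeasurable measurableSet_Ioo).mul
      (cont_nu_rpow hq).aestronglyMeasurable.restrict
  refine ⟨hmeas, HasFiniteIntegral.restrict_of_bounded (C := C) measure_Ioo_lt_top ?_⟩
  filter_upwards [ae_restrict_mem measurableSet_Ioo] with x hx
  have h1 : |(1 - x^2) ^ q| ≤ 1 := by
    rw [abs_of_nonneg (Real.rpow_nonneg (nu_pos hx).le _)]
    exact Real.rpow_le_one (nu_pos hx).le nu_le_one hq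
  have h2 : ‖G x‖ ≤ C := hC x (Set.Ioo_subset_Icc_self hx)
  calc ‖G x * (1-x^2)^q‖ = ‖G x‖ * |(1-x^2)^q| := by rw [norm_mul]; rfl
  _ ≤ C * 1 := mul_le_mul h2 h1 (abs_nonneg _) ((norm_nonneg _).trans h2)
  _ = C := mul_one C

lemma key_hasDerivAt (d : ℕ) {u g : ℝ → ℝ} {x W : ℝ} (hx : x ∈ Set.Ioo (-1:ℝ) 1)
    (hU : HasDerivAt u (g x) x) (hg : HasDerivAt g W x) (hu0 : u x ≠ 0) :
    HasDerivAt (fun y => ((d:ℝ)/((d:ℝ)+2)) * ((g y)^3 / u y * (1 - y^2) ^ ((d:ℝ)/2 + 1)))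
      ((g x)^2 / u x * ((1-x^2) * W - d * x * g x) * (1-x^2) ^ ((d:ℝ)/2)
        - ((d:ℝ)/((d:ℝ)+2)) * ((g x)^4 / (u x)^2 * (1-x^2) ^ ((d:ℝ)/2 + 1))
        + (2*((d:ℝ)-1)/((d:ℝ)+2)) * ((g x)^2 * W / u x * (1-x^2) ^ ((d:ℝ)/2 + 1))) x := by
  have ht : (0:ℝ) < 1 - x^2 := nu_pos hx
  have h1 : HasDerivAt (fun y => (g y)^3) (3 * (g x)^2 * W) x := by
    have h := (hasDerivAt_pow 3 (g x)).comp x hg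
    exact h.congr_deriv (by norm_num)
  have h2 := h1.div hU hu0
  have h3 : HasDerivAt (fun y : ℝ => 1 - y^2) (-(2*x)) x := by
    simpa using (hasDerivAt_pow 2 x).const_sub 1
  have h4 := h3.rpow_const (p := (d:ℝ)/2 + 1) (Or.inl ht.ne')
  have h5 := (h2.mul h4).const_mul ((d:ℝ)/((d:ℝ)+2))
  refine h5.congr_deriv ?_
  have e2 : (1-x^2) ^ ((d:ℝ)/2 + 1 - 1) = (1-x^2) ^ ((d:ℝ)/2) := by norm_num
  have e1 : (1-x^2) ^ ((d:ℝ)/2 + 1) = (1-x^2) ^ ((d:ℝ)/2) * (1-x^2) := by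
    rw [Real.rpow_add ht, Real.rpow_one]
  rw [e2, e1]
  simp only [Pi.div_apply]
  have hd2 : ((d:ℝ)+2) ≠ 0 := by positivity
  field_simp
  ring

theorem ultraspherical_L_gamma (d : ℕ) (hd : 1 ≤ d)
    (u : ℝ → ℝ) (hu : ContDiffOn ℝ (⊤ : ℕ∞) u (Set.Icc (-1 : ℝ) 1))
    (hupos : ∀ x ∈ Set.Icc (-1 : ℝ) 1, 0 < u x) :
    ∫ x, ((deriv u x) ^ 2 / u x) * (1 - x ^ 2) *
        ((1 - x ^ 2) * deriv (deriv u) x - d * x * deriv u x) ∂(nuMeas d) =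
      ((d : ℝ) / (d + 2)) * (∫ x, ((deriv u x) ^ 4 / (u x) ^ 2) * (1 - x ^ 2) ^ 2 ∂(nuMeas d)) -
        (2 * ((d : ℝ) - 1) / (d + 2)) *
          ∫ x, ((deriv u x) ^ 2 * deriv (deriv u) x / u x) * (1 - x ^ 2) ^ 2 ∂(nuMeas d) := by
  have h11 : (-1:ℝ) < 1 := by norm_num
  have hUD : UniqueDiffOn ℝ (Set.Icc (-1:ℝ) 1) := uniqueDiffOn_Icc h11
  set v1 : ℝ → ℝ := derivWithin u (Set.Icc (-1:ℝ) 1) with hv1def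
  set v2 : ℝ → ℝ := derivWithin v1 (Set.Icc (-1:ℝ) 1) with hv2def
  have hv1C : ContDiffOn ℝ (⊤ : ℕ∞) v1 (Set.Icc (-1:ℝ) 1) := hu.derivWithin hUD (by simp)
  have hucont : ContinuousOn u (Set.Icc (-1:ℝ) 1) := hu.continuousOn
  have hv1cont : ContinuousOn v1 (Set.Icc (-1:ℝ) 1) := hv1C.continuousOn
  have hv2cont : ContinuousOn v2 (Set.Icc (-1:ℝ) 1) :=
    hv1C.continuousOn_derivWithin hUD (by simp)
  have hu0 : ∀ x ∈ Set.Icc (-1:ℝ) 1, u x ≠ 0 := fun x hx => (hupos x hx).ne'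
  have hv1eq : ∀ x ∈ Set.Ioo (-1:ℝ) 1, v1 x = deriv u x := fun x hx =>
    derivWithin_of_mem_nhds (Icc_mem_nhds hx.1 hx.2)
  have hDu : ContDiffOn ℝ (⊤ : ℕ∞) (deriv u) (Set.Ioo (-1:ℝ) 1) :=
    (hu.mono Set.Ioo_subset_Icc_self).deriv_of_isOpen isOpen_Ioo (by simp)
  have hv1ev : ∀ x ∈ Set.Ioo (-1:ℝ) 1, v1 =ᶠ[nhds x] deriv u := by
    intro x hx
    filter_upwards [Ioo_mem_nhds hx.1 hx.2] with y hy using hv1eq y hy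
  have hv2eq : ∀ x ∈ Set.Ioo (-1:ℝ) 1, v2 x = deriv (deriv u) x := by
    intro x hx
    rw [hv2def, derivWithin_of_mem_nhds (Icc_mem_nhds hx.1 hx.2)]
    exact Filter.EventuallyEq.deriv_eq (hv1ev x hx)
  -- HasDerivAt facts
  have hder : ∀ x ∈ Set.Ioo (-1:ℝ) 1,
      HasDerivAt u (v1 x) x ∧ HasDerivAt v1 (v2 x) x := by
    intro x hx
    have hnb : Set.Icc (-1:ℝ) 1 ∈ nhds x := Icc_mem_nhds hx.1 hx.2
    have hd1 : HasDerivAt u (deriv u x) x :=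
      ((hu.contDiffAt hnb).differentiableAt (by simp)).hasDerivAt
    have hd2 : HasDerivAt (deriv u) (deriv (deriv u) x) x :=
      ((hDu.contDiffAt (isOpen_Ioo.mem_nhds hx)).differentiableAt (by simp)).hasDerivAt
    refine ⟨by rw [hv1eq x hx]; exact hd1, ?_⟩
    rw [hv2eq x hx]
    exact hd2.congr_of_eventuallyEq (hv1ev x hx)
  -- the weighted integrand functions
  set c1 : ℝ := (d:ℝ)/((d:ℝ)+2) with hc1
  set c2 : ℝ := 2*((d:ℝ)-1)/((d:ℝ)+2) with hc2
  set gL : ℝ → ℝ := fun x => (v1 x)^2 / u x * ((1-x^2) * v2 x - (d:ℝ) * x * v1 x) with hgL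
  set gA : ℝ → ℝ := fun x => (v1 x)^4 / (u x)^2 with hgA
  set gC : ℝ → ℝ := fun x => (v1 x)^2 * v2 x / u x with hgC
  have hgLc : ContinuousOn gL (Set.Icc (-1:ℝ) 1) := by
    apply ContinuousOn.mul ((hv1cont.pow 2).div hucont hu0)
    exact (((by fun_prop : ContinuousOn (fun x : ℝ => 1 - x^2) (Set.Icc (-1:ℝ) 1)).mul
      hv2cont).sub ((by fun_prop : ContinuousOn (fun x : ℝ => (d:ℝ) * x) _).mul hv1cont))
  have hgAc : ContinuousOn gA (Set.Icc (-1:ℝ) 1) :=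
    (hv1cont.pow 4).div (hucont.pow 2) (fun x hx => pow_ne_zero 2 (hu0 x hx))
  have hgCc : ContinuousOn gC (Set.Icc (-1:ℝ) 1) :=
    ((hv1cont.pow 2).mul hv2cont).div hucont hu0
  have hq1 : (0:ℝ) ≤ (d:ℝ)/2 := by positivity
  have hq2 : (0:ℝ) ≤ (d:ℝ)/2 + 1 := by positivity
  have intL := integrableOn_weighted hgLc hq1
  have intA := integrableOn_weighted hgAc hq2
  have intC := integrableOn_weighted hgCc hq2
  -- conversion of the three integrals
  have convL : (∫ x, ((deriv u x) ^ 2 / u x) * (1 - x ^ 2) *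
        ((1 - x ^ 2) * deriv (deriv u) x - d * x * deriv u x) ∂(nuMeas d))
      = (Zd d)⁻¹ * ∫ x in Set.Ioo (-1:ℝ) 1, gL x * (1-x^2) ^ ((d:ℝ)/2) := by
    rw [integral_nuMeas d hd, ← integral_const_mul]
    apply setIntegral_congr_fun measurableSet_Ioo
    intro x hx
    have ht : (0:ℝ) < 1 - x^2 := nu_pos hx
    have e : (1-x^2) ^ ((d:ℝ)/2-1) * (1-x^2) = (1-x^2) ^ ((d:ℝ)/2) := by
      have h := (Real.rpow_add ht ((d:ℝ)/2-1) 1).symm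
      rw [Real.rpow_one] at h
      rw [h]
      congr 1
      ring
    simp only [hgL, hv1eq x hx, hv2eq x hx]
    rw [← e]
    ring
  have convA : (∫ x, ((deriv u x) ^ 4 / (u x) ^ 2) * (1 - x ^ 2) ^ 2 ∂(nuMeas d))
      = (Zd d)⁻¹ * ∫ x in Set.Ioo (-1:ℝ) 1, gA x * (1-x^2) ^ ((d:ℝ)/2+1) := by
    rw [integral_nuMeas d hd, ← integral_const_mul]
    apply setIntegral_congr_fun measurableSet_Ioo
    intro x hx
    have ht : (0:ℝ) < 1 - x^2 := nu_pos hx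
    have e : (1-x^2) ^ ((d:ℝ)/2-1) * (1-x^2)^(2:ℕ) = (1-x^2) ^ ((d:ℝ)/2+1) := by
      rw [← Real.rpow_natCast (1-x^2) 2, ← Real.rpow_add ht]
      congr 1
      push_cast
      ring
    simp only [hgA, hv1eq x hx]
    rw [← e]
    ring
  have convC : (∫ x, ((deriv u x) ^ 2 * deriv (deriv u) x / u x) * (1 - x ^ 2) ^ 2 ∂(nuMeas d))
      = (Zd d)⁻¹ * ∫ x in Set.Ioo (-1:ℝ) 1, gC x * (1-x^2) ^ ((d:ℝ)/2+1) := by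
    rw [integral_nuMeas d hd, ← integral_const_mul]
    apply setIntegral_congr_fun measurableSet_Ioo
    intro x hx
    have ht : (0:ℝ) < 1 - x^2 := nu_pos hx
    have e : (1-x^2) ^ ((d:ℝ)/2-1) * (1-x^2)^(2:ℕ) = (1-x^2) ^ ((d:ℝ)/2+1) := by
      rw [← Real.rpow_natCast (1-x^2) 2, ← Real.rpow_add ht]
      congr 1
      push_cast
      ring
    simp only [hgC, hv1eq x hx, hv2eq x hx]
    rw [← e]
    ring
  -- the FTC step
  set combo : ℝ → ℝ := fun x => gL x * (1-x^2) ^ ((d:ℝ)/2)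
      - c1 * (gA x * (1-x^2) ^ ((d:ℝ)/2+1)) + c2 * (gC x * (1-x^2) ^ ((d:ℝ)/2+1)) with hcombo
  have intcombo : IntegrableOn combo (Set.Ioo (-1:ℝ) 1) :=
    ((intL.sub (intA.const_mul c1)).add (intC.const_mul c2))
  set f : ℝ → ℝ := fun y => c1 * ((v1 y)^3 / u y * (1-y^2) ^ ((d:ℝ)/2+1)) with hf
  have hfc : ContinuousOn f (Set.Icc (-1:ℝ) 1) :=
    continuousOn_const.mul (((hv1cont.pow 3).div hucont hu0).mul
      (cont_nu_rpow hq2).continuousOn)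
  have hfd : ∀ x ∈ Set.Ioo (-1:ℝ) 1, HasDerivAt f (combo x) x := by
    intro x hx
    obtain ⟨hd1, hd2⟩ := hder x hx
    have := key_hasDerivAt d hx hd1 hd2 (hu0 x (Set.Ioo_subset_Icc_self hx))
    convert this using 1
  have hIcombo : IntervalIntegrable combo volume (-1 : ℝ) 1 :=
    (intervalIntegrable_iff_integrableOn_Ioo_of_le h11.le).2 intcombo
  have hFTC := intervalIntegral.integral_eq_sub_of_hasDerivAt_of_le h11.le hfc hfd hIcombo
  have hq2ne : ((d:ℝ)/2 + 1) ≠ 0 := by positivity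
  have hf1 : f 1 = 0 := by
    have : (1:ℝ) - (1:ℝ)^2 = 0 := by norm_num
    simp [hf, this, Real.zero_rpow hq2ne]
  have hfm1 : f (-1) = 0 := by
    have : (1:ℝ) - (-1:ℝ)^2 = 0 := by norm_num
    simp [hf, this, Real.zero_rpow hq2ne]
  have hzero : ∫ x in Set.Ioo (-1:ℝ) 1, combo x = 0 := by
    rw [← integral_Ioc_eq_integral_Ioo, ← intervalIntegral.integral_of_le h11.le, hFTC,
      hf1, hfm1, sub_zero]
  have split : ∫ x in Set.Ioo (-1:ℝ) 1, combo x
      = (∫ x in Set.Ioo (-1:ℝ) 1, gL x * (1-x^2) ^ ((d:ℝ)/2))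
        - c1 * (∫ x in Set.Ioo (-1:ℝ) 1, gA x * (1-x^2) ^ ((d:ℝ)/2+1))
        + c2 * (∫ x in Set.Ioo (-1:ℝ) 1, gC x * (1-x^2) ^ ((d:ℝ)/2+1)) := by
    have iLA : IntegrableOn (fun x => gL x * (1-x^2) ^ ((d:ℝ)/2)
        - c1 * (gA x * (1-x^2) ^ ((d:ℝ)/2+1))) (Set.Ioo (-1:ℝ) 1) :=
      intL.sub (intA.const_mul c1)
    have iC : IntegrableOn (fun x => c2 * (gC x * (1-x^2) ^ ((d:ℝ)/2+1)))
        (Set.Ioo (-1:ℝ) 1) := intC.const_mul c2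
    simp only [hcombo]
    rw [integral_add iLA iC, integral_sub intL (intA.const_mul c1),
      integral_const_mul, integral_const_mul]
  rw [convL, convA, convC]
  have : (∫ x in Set.Ioo (-1:ℝ) 1, gL x * (1-x^2) ^ ((d:ℝ)/2))
      = c1 * (∫ x in Set.Ioo (-1:ℝ) 1, gA x * (1-x^2) ^ ((d:ℝ)/2+1))
        - c2 * (∫ x in Set.Ioo (-1:ℝ) 1, gC x * (1-x^2) ^ ((d:ℝ)/2+1)) := by
    rw [split] at hzero
    linarith
  rw [this, hc1, hc2]
  ring
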